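/- arXiv:2208.06267 — 8 statements merged into one kernel-verified Lean document; each statement's English description precedes it below -/
import Mathlib

section
/- In the non-imitable model of Figure 2b, the observational reward satisfies P(Y = true) = 1, yet for every probability mass function pi on Bool, drawing X' from pi independently of U and setting W' := X' and Y' := U XOR (NOT W') yields P(Y' = true) = 1/2. Hence no policy pi attains the observational distribution of Y. -/
/-!
Observationally `Y = U xor (not U)` is constantly `true`. Under `do(π)` the bit `U` stays uniform
and independent of `X'`, and xor with any fixed bit permutes `Bool`, so `Y' = U xor (not X')` is
again uniform whatever `π` is: its law is that of `U`, which puts mass `1/2` on `true`.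
-/

open scoped ENNReal

/-- Law of the exogenous variable `U`: a uniform bit. -/
noncomputable def fig2bU : PMF Bool := PMF.bernoulli (1 / 2) (by norm_num)

/-- Observational law of `Y` where `X := U`, `W := X`, `Y := U XOR (NOT W)`. -/
noncomputable def fig2bY : PMF Bool := fig2bU.map fun u => xor u (!u)

/-- Law of `Y'` under `do(π)`: `X' ~ π` independent of `U`, `W' := X'`,
`Y' := U XOR (NOT W')`. -/
noncomputable def fig2bYdo (π : PMF Bool) : PMF Bool :=
  fig2bU.bind fun u => π.map fun x' => xor u (!x')

theorem PMF.map_uniformOfFintype_equiv {α β : Type*} [Fintype α] [Nonempty α] [Fintype β]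
    [Nonempty β] (e : α ≃ β) : (uniformOfFintype α).map e = uniformOfFintype β := by
  ext b
  rw [map_apply,
    tsum_eq_single (e.symm b) fun a ha => if_neg fun h => ha (e.symm_apply_eq.2 h).symm,
    if_pos (e.apply_symm_apply b).symm, uniformOfFintype_apply, uniformOfFintype_apply,
    Fintype.card_congr e]

theorem fig2bU_eq_uniformOfFintype : fig2bU = PMF.uniformOfFintype Bool := by
  ext b
  change cond b ((1 / 2 : NNReal) : ℝ≥0∞) (1 - (1 / 2 : NNReal)) = _
  cases b <;> simp [ENNReal.one_sub_inv_two]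

theorem fig2bU_map_xor (b : Bool) : fig2bU.map (xor · b) = fig2bU := by
  rw [fig2bU_eq_uniformOfFintype]
  exact PMF.map_uniformOfFintype_equiv (Function.Involutive.toPerm (xor · b) fun c => by
    simp only [Bool.xor_assoc, Bool.xor_self, Bool.xor_false])

theorem fig2bY_eq_pure_true : fig2bY = PMF.pure true := calc
  fig2bY = fig2bU.map (Function.const Bool true) :=
    congrArg (PMF.map · fig2bU) (funext Bool.xor_not_self)
  _ = PMF.pure true := PMF.map_const ..

theorem fig2bYdo_eq_fig2bU (π : PMF Bool) : fig2bYdo π = fig2bU := calc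
  fig2bYdo π = π.bind fun x' => fig2bU.map (xor · !x') := by
    simp only [fig2bYdo, ← PMF.bind_pure_comp]
    exact PMF.bind_comm ..
  _ = fig2bU := by simp only [fig2bU_map_xor, PMF.bind_const]

theorem fig2b_not_imitable :
    fig2bY true = 1 ∧
    (∀ π : PMF Bool, fig2bYdo π true = 1 / 2) ∧
    (∀ π : PMF Bool, fig2bYdo π ≠ fig2bY) := by
  have hY : fig2bY true = 1 := by rw [fig2bY_eq_pure_true, PMF.pure_apply_self]
  have hYdo (π : PMF Bool) : fig2bYdo π true = 1 / 2 := by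
    simp [fig2bYdo_eq_fig2bU, fig2bU_eq_uniformOfFintype]
  refine ⟨hY, hYdo, fun π h => ?_⟩
  have : (1 / 2 : ℝ≥0∞) = 1 := by rw [← hYdo π, h, hY]
  norm_num at this
end

section
/- In the practically-imitable front-door model, the atomic intervention do(X = false) exactly imitates the observational reward: P(Y_false = true) = 41/50 = P(Y = true), whereas P(Y_true = true) = 9/50. -/
/-!
Practically-imitable front-door model: `U_X, U_Y, U_W` independent Bool-valued with
`P(U_X = true) = 9/10`, `P(U_Y = true) = 9/10`, `P(U_W = true) = 1/10`;
`X := U_X XOR U_Y`, `W := X XOR U_W`, `Y := W XOR U_Y`; under `do(X = x)`,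
`W_x := x XOR U_W` and `Y_x := W_x XOR U_Y`.
STATEMENT 4: `P(Y_false = true) = 41/50 = P(Y = true)`, whereas `P(Y_true = true) = 9/50`.
-/

open scoped ENNReal

/-- Joint law of the exogenous variables `(U_X, U_Y, U_W)`. -/
noncomputable def fdBase : PMF (Bool × Bool × Bool) := do
  let ux ← PMF.bernoulli (9 / 10) (by rw [div_le_one (by norm_num)]; norm_num)
  let uy ← PMF.bernoulli (9 / 10) (by rw [div_le_one (by norm_num)]; norm_num)
  let uw ← PMF.bernoulli (1 / 10) (by rw [div_le_one (by norm_num)]; norm_num)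
  pure (ux, uy, uw)

/-- `X := U_X XOR U_Y`. -/
def fdX (ux uy : Bool) : Bool := xor ux uy

/-- `W := X XOR U_W`. -/
def fdW (ux uy uw : Bool) : Bool := xor (fdX ux uy) uw

/-- `Y := W XOR U_Y`. -/
def fdY (ux uy uw : Bool) : Bool := xor (fdW ux uy uw) uy

/-- Under the atomic intervention `do(X = x)`: `W_x := x XOR U_W`. -/
def fdWdo (x uw : Bool) : Bool := xor x uw

/-- Under the atomic intervention `do(X = x)`: `Y_x := W_x XOR U_Y`. -/
def fdYdo (x uy uw : Bool) : Bool := xor (fdWdo x uw) uy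

lemma fdBase_apply (v : Bool × Bool × Bool) :
    fdBase v = (if v.1 then (9:ℝ≥0∞)/10 else 1/10) * (if v.2.1 then 9/10 else 1/10) *
      (if v.2.2 then 1/10 else 9/10) := by
  have h9 : (1:ℝ≥0∞) - 9/10 = 1/10 :=
    ENNReal.sub_eq_of_eq_add ((ENNReal.div_lt_top (by norm_num) (by norm_num)).ne)
      (by rw [ENNReal.div_add_div_same]; norm_num; rw [ENNReal.div_self] <;> norm_num)
  have h1 : (1:ℝ≥0∞) - 1/10 = 9/10 :=
    ENNReal.sub_eq_of_eq_add ((ENNReal.div_lt_top (by norm_num) (by norm_num)).ne)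
      (by rw [ENNReal.div_add_div_same]; norm_num; rw [ENNReal.div_self] <;> norm_num)
  have hd : fdBase = (PMF.bernoulli (9/10) (by rw [div_le_one (by norm_num)]; norm_num)).bind
      (fun ux => (PMF.bernoulli (9/10) (by rw [div_le_one (by norm_num)]; norm_num)).bind
      (fun uy => (PMF.bernoulli (1/10) (by rw [div_le_one (by norm_num)]; norm_num)).map
      (fun uw => (ux, uy, uw)))) := rfl
  obtain ⟨a, b, c⟩ := v
  rcases a <;> rcases b <;> rcases c <;>
    simp [hd, PMF.bind_apply, PMF.bernoulli_apply, PMF.map_apply,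
      tsum_bool, Prod.mk.injEq, h9, h1, show (1:ℝ≥0∞) - 10⁻¹ = 9/10 from one_div (10:ℝ≥0∞) ▸ h1] <;> ring

theorem frontdoor_atomic_imitation :
    (fdBase.map fun v => fdYdo false v.2.1 v.2.2) true = 41 / 50 ∧
    (fdBase.map fun v => fdY v.1 v.2.1 v.2.2) true = 41 / 50 ∧
    (fdBase.map fun v => fdYdo true v.2.1 v.2.2) true = 9 / 50 := by
  refine ⟨?_, ?_, ?_⟩ <;>
  · simp only [fdY, fdYdo, fdW, fdWdo, fdX, PMF.map_apply, tsum_fintype,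
      Fintype.sum_prod_type, Fintype.sum_bool, fdBase_apply]
    simp only [show (True:Prop) from trivial, if_true, Bool.xor_true, Bool.xor_false,
      Bool.not_true, Bool.not_false, reduceIte, reduceCtorEq]
    have hinv : (10:ℝ≥0∞)⁻¹ = 1/10 := (one_div _).symm
    have h3 : ∀ a b c : ℝ≥0∞, a/10 * (b/10) * (c/10) = a*b*c/1000 := by
      intro a b c
      have h : (1000:ℝ≥0∞)⁻¹ = 10⁻¹ * 10⁻¹ * 10⁻¹ := by
        rw [← ENNReal.mul_inv (by norm_num) (by norm_num),
          ← ENNReal.mul_inv (by norm_num) (by norm_num)]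
        norm_num
      rw [div_eq_mul_inv, div_eq_mul_inv, div_eq_mul_inv, div_eq_mul_inv, h]
      ring
    simp only [div_eq_mul_inv, one_mul]
    ring_nf
    rw [← ENNReal.inv_pow, ← ENNReal.div_eq_inv_mul, ← ENNReal.div_eq_inv_mul,
      ENNReal.div_eq_div_iff (by norm_num) (by norm_num) (by norm_num) (by norm_num)]
    norm_num
end

section
/- Front-door adjustment for functional causal models: in the front-door functional model, for all x in 𝒳 and y in 𝒴, P(Y_x = y) = sum over w of P(W = w | X = x) times [ sum over x' of P(Y = y | W = w, X = x') times P(X = x') ]. -/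
/-!
In kernel form the model reads `X ~ a u`, `W ~ q X`, `Y ~ r W u` with `u ~ μ`, so that
`P(X = x', W = w) = P(X = x') · q x' w` and `P(x', w, y) = q x' w · ∑ u, μ u · a u x' · r w u y`.
Hence `P(W = w | X = x) = q x w`, and in `∑ x', P(y | w, x') P(x')` the factor `P(x')` cancels,
leaving `∑ u, μ u · r w u y` once `x'` is summed out. On the other side, swapping the order in
which `u` and `W` are drawn writes `P(Y_x = y)` as `∑ w, q x w · ∑ u, μ u · r w u y`.
-/

open scoped ENNReal

/-- Observational joint law of `(X, W, Y)` in the front-door functional model. -/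
noncomputable def fdObs {𝒰 EX EW EY 𝒳 𝒲 𝒴 : Type}
    (muU : PMF 𝒰) (muEX : PMF EX) (muEW : PMF EW) (muEY : PMF EY)
    (gX : 𝒰 × EX → 𝒳) (gW : 𝒳 × EW → 𝒲) (gY : 𝒲 × 𝒰 × EY → 𝒴) :
    PMF (𝒳 × 𝒲 × 𝒴) := do
  let u ← muU
  let ex ← muEX
  let ew ← muEW
  let ey ← muEY
  let x := gX (u, ex)
  let w := gW (x, ew)
  pure (x, w, gY (w, u, ey))

/-- Interventional law of `Y_x` under `do(X = x)` in the front-door functional model. -/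
noncomputable def fdDo {𝒰 EW EY 𝒳 𝒲 𝒴 : Type}
    (muU : PMF 𝒰) (muEW : PMF EW) (muEY : PMF EY)
    (gW : 𝒳 × EW → 𝒲) (gY : 𝒲 × 𝒰 × EY → 𝒴) (x : 𝒳) : PMF 𝒴 := do
  let u ← muU
  let ew ← muEW
  let ey ← muEY
  pure (gY (gW (x, ew), u, ey))

namespace FrontDoor

variable {U X W Y : Type*}

noncomputable def obsLaw (μ : PMF U) (a : U → PMF X) (q : X → PMF W) (r : W → U → PMF Y) :
    PMF (X × W × Y) :=
  μ.bind fun u => (a u).bind fun x => (q x).bind fun w => (r w u).bind fun y => PMF.pure (x, w, y)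

noncomputable def doLaw (μ : PMF U) (q : X → PMF W) (r : W → U → PMF Y) (x : X) : PMF Y :=
  μ.bind fun u => (q x).bind fun w => r w u

variable (μ : PMF U) (a : U → PMF X) (q : X → PMF W) (r : W → U → PMF Y)

theorem obsLaw_apply (x : X) (w : W) (y : Y) :
    obsLaw μ a q r (x, w, y) = q x w * ∑' u, μ u * a u x * r w u y := by
  classical
  have htriple : ∀ x' w' y', (x, w, y) = (x', w', y') ↔ y = y' ∧ w = w' ∧ x = x' := by
    simp only [Prod.mk.injEq]; tauto
  simp only [obsLaw, PMF.bind_apply, PMF.pure_apply, htriple, ite_and, mul_ite, mul_one, mul_zero,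
    tsum_ite_eq']
  rw [← ENNReal.tsum_mul_left]
  exact tsum_congr fun u => by ring

theorem obsLaw_map_fst : (obsLaw μ a q r).map (fun v => v.1) = μ.bind a := by
  simp only [obsLaw, PMF.map_bind, PMF.pure_map, PMF.bind_const, PMF.bind_pure]

theorem obsLaw_map_fst_snd_fst_apply (x : X) (w : W) :
    (obsLaw μ a q r).map (fun v => (v.1, v.2.1)) (x, w) = μ.bind a x * q x w := by
  classical
  have hpair : ∀ x' w', (x, w) = (x', w') ↔ w = w' ∧ x = x' := by
    simp only [Prod.mk.injEq]; tauto
  simp only [obsLaw, PMF.map_bind, PMF.pure_map, PMF.bind_const, PMF.bind_apply, PMF.pure_apply,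
    hpair, ite_and, mul_ite, mul_one, mul_zero, tsum_ite_eq']
  rw [← ENNReal.tsum_mul_right]
  exact tsum_congr fun u => (mul_assoc _ _ _).symm

theorem doLaw_eq_bind (x : X) : doLaw μ q r x = (q x).bind fun w => μ.bind (r w) :=
  PMF.bind_comm _ _ _

theorem tsum_tsum_mul_eq_bind_apply (w : W) (y : Y) :
    ∑' x, ∑' u, μ u * a u x * r w u y = μ.bind (r w) y := by
  rw [ENNReal.tsum_comm, PMF.bind_apply]
  refine tsum_congr fun u => ?_
  rw [ENNReal.tsum_mul_right, ENNReal.tsum_mul_left, PMF.tsum_coe, mul_one]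

theorem doLaw_apply_eq_adjustment [Fintype X] [Fintype W]
    (hpos : ∀ x' w, 0 < (obsLaw μ a q r).map (fun v => (v.1, v.2.1)) (x', w)) (x : X) (y : Y) :
    doLaw μ q r x y =
      ∑ w, ((obsLaw μ a q r).map (fun v => (v.1, v.2.1)) (x, w)
          / (obsLaw μ a q r).map (fun v => v.1) x) *
        ∑ x', (obsLaw μ a q r (x', w, y) / (obsLaw μ a q r).map (fun v => (v.1, v.2.1)) (x', w)) *
          (obsLaw μ a q r).map (fun v => v.1) x' := by
  simp only [obsLaw_map_fst, obsLaw_map_fst_snd_fst_apply] at hpos ⊢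
  have hne : ∀ x' w, μ.bind a x' ≠ 0 ∧ q x' w ≠ 0 := fun x' w =>
    mul_ne_zero_iff.mp (hpos x' w).ne'
  have hX : ∀ x', μ.bind a x' ≠ 0 := fun x' =>
    let ⟨w, _⟩ := (q x').support_nonempty
    (hne x' w).1
  have hmediator : ∀ w, μ.bind a x * q x w / μ.bind a x = q x w := fun w => by
    rw [mul_comm, ENNReal.mul_div_cancel_right (hX x) (PMF.apply_ne_top _ _)]
  have hinner : ∀ w x', obsLaw μ a q r (x', w, y) / (μ.bind a x' * q x' w) * μ.bind a x' =
      ∑' u, μ u * a u x' * r w u y := fun w x' => by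
    rw [obsLaw_apply, mul_comm (μ.bind a x'),
      ENNReal.mul_div_mul_left _ _ (hne x' w).2 (PMF.apply_ne_top _ _),
      ENNReal.div_mul_cancel (hX x') (PMF.apply_ne_top _ _)]
  rw [doLaw_eq_bind, PMF.bind_apply, tsum_fintype]
  refine Finset.sum_congr rfl fun w _ => ?_
  rw [hmediator, Finset.sum_congr rfl fun x' _ => hinner w x',
    ← tsum_fintype (L := .unconditional _), tsum_tsum_mul_eq_bind_apply]

end FrontDoor

open FrontDoor

theorem fdObs_eq_obsLaw {𝒰 EX EW EY 𝒳 𝒲 𝒴 : Type}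
    (muU : PMF 𝒰) (muEX : PMF EX) (muEW : PMF EW) (muEY : PMF EY)
    (gX : 𝒰 × EX → 𝒳) (gW : 𝒳 × EW → 𝒲) (gY : 𝒲 × 𝒰 × EY → 𝒴) :
    fdObs muU muEX muEW muEY gX gW gY = obsLaw muU (fun u => muEX.map fun e => gX (u, e))
      (fun x => muEW.map fun e => gW (x, e)) (fun w u => muEY.map fun e => gY (w, u, e)) := by
  simp only [fdObs, obsLaw, PMF.bind_map, Function.comp_def]
  rfl

theorem fdDo_eq_doLaw {𝒰 EW EY 𝒳 𝒲 𝒴 : Type}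
    (muU : PMF 𝒰) (muEW : PMF EW) (muEY : PMF EY)
    (gW : 𝒳 × EW → 𝒲) (gY : 𝒲 × 𝒰 × EY → 𝒴) (x : 𝒳) :
    fdDo muU muEW muEY gW gY x = doLaw muU (fun x => muEW.map fun e => gW (x, e))
      (fun w u => muEY.map fun e => gY (w, u, e)) x := by
  simp only [fdDo, doLaw, PMF.bind_map, Function.comp_def]
  rfl

theorem frontdoor_adjustment_functional_general
    {𝒰 EX EW EY 𝒳 𝒲 𝒴 : Type}
    [Fintype 𝒳] [Fintype 𝒲]
    (muU : PMF 𝒰) (muEX : PMF EX) (muEW : PMF EW) (muEY : PMF EY)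
    (gX : 𝒰 × EX → 𝒳) (gW : 𝒳 × EW → 𝒲) (gY : 𝒲 × 𝒰 × EY → 𝒴)
    (hpos : ∀ (x' : 𝒳) (w : 𝒲),
      0 < (fdObs muU muEX muEW muEY gX gW gY).map (fun v => (v.1, v.2.1)) (x', w)) :
    ∀ (x : 𝒳) (y : 𝒴),
      fdDo muU muEW muEY gW gY x y =
        ∑ w : 𝒲,
          ((fdObs muU muEX muEW muEY gX gW gY).map (fun v => (v.1, v.2.1)) (x, w)
            / (fdObs muU muEX muEW muEY gX gW gY).map (fun v => v.1) x) *
          ∑ x' : 𝒳,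
            ((fdObs muU muEX muEW muEY gX gW gY) (x', w, y)
              / (fdObs muU muEX muEW muEY gX gW gY).map (fun v => (v.1, v.2.1)) (x', w)) *
            (fdObs muU muEX muEW muEY gX gW gY).map (fun v => v.1) x' := by
  intro x y
  rw [fdObs_eq_obsLaw] at hpos ⊢
  rw [fdDo_eq_doLaw]
  exact doLaw_apply_eq_adjustment _ _ _ _ hpos x y

theorem frontdoor_adjustment_functional
    {𝒰 EX EW EY 𝒳 𝒲 𝒴 : Type}
    [Fintype 𝒰] [Nonempty 𝒰] [Fintype EX] [Nonempty EX] [Fintype EW] [Nonempty EW]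
    [Fintype EY] [Nonempty EY] [Fintype 𝒳] [Nonempty 𝒳] [Fintype 𝒲] [Nonempty 𝒲]
    [Fintype 𝒴] [Nonempty 𝒴]
    (muU : PMF 𝒰) (muEX : PMF EX) (muEW : PMF EW) (muEY : PMF EY)
    (gX : 𝒰 × EX → 𝒳) (gW : 𝒳 × EW → 𝒲) (gY : 𝒲 × 𝒰 × EY → 𝒴)
    (hpos : ∀ (x' : 𝒳) (w : 𝒲),
      0 < (fdObs muU muEX muEW muEY gX gW gY).map (fun v => (v.1, v.2.1)) (x', w)) :
    ∀ (x : 𝒳) (y : 𝒴),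
      fdDo muU muEW muEY gW gY x y =
        ∑ w : 𝒲,
          ((fdObs muU muEX muEW muEY gX gW gY).map (fun v => (v.1, v.2.1)) (x, w)
            / (fdObs muU muEX muEW muEY gX gW gY).map (fun v => v.1) x) *
          ∑ x' : 𝒳,
            ((fdObs muU muEX muEW muEY gX gW gY) (x', w, y)
              / (fdObs muU muEX muEW muEY gX gW gY).map (fun v => (v.1, v.2.1)) (x', w)) *
            (fdObs muU muEX muEW muEY gX gW gY).map (fun v => v.1) x' :=
  frontdoor_adjustment_functional_general muU muEX muEW muEY gX gW gY hpos
end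

section
/- Backdoor adjustment for functional causal models: in the backdoor functional model, for all x in 𝒳 and y in 𝒴, P(Y_x = y) = sum over z of P(Z = z) times P(Y = y | X = x, Z = z). -/
/-!
Collect the noises other than `e_X` into one background variable `a = (u, e_Z, e_Y)`, so that
`Z = f a`, `Y_x = h x a` and `X = g Z e_X` with `e_X` independent of `a`. For fixed `(z, x, y)`
the event `{Z = z, X = x, Y = y}` is then the rectangle `{f a = z, h x a = y} × {g z e_X = x}`,
so independence factors
`P(Z = z, X = x, Y = y) = P(Z = z, Y_x = y) · P(g z e_X = x)` and
`P(Z = z, X = x) = P(Z = z) · P(g z e_X = x)`.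
The common factor cancels in `P(Y = y | X = x, Z = z)`, and the adjustment sum collapses to
`∑ z, P(Z = z, Y_x = y) = P(Y_x = y)`.
-/

open scoped ENNReal

/-- Observational joint law of `(Z, X, Y)` in the backdoor functional model. -/
noncomputable def bdObs {𝒰 EZ EX EY 𝒵 𝒳 𝒴 : Type}
    (muU : PMF 𝒰) (muEZ : PMF EZ) (muEX : PMF EX) (muEY : PMF EY)
    (gZ : 𝒰 × EZ → 𝒵) (gX : 𝒵 × EX → 𝒳) (gY : 𝒳 × 𝒵 × 𝒰 × EY → 𝒴) :
    PMF (𝒵 × 𝒳 × 𝒴) := do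
  let u ← muU
  let ez ← muEZ
  let ex ← muEX
  let ey ← muEY
  let z := gZ (u, ez)
  let x := gX (z, ex)
  pure (z, x, gY (x, z, u, ey))

/-- Interventional law of `Y_x` under `do(X = x)` in the backdoor functional model. -/
noncomputable def bdDo {𝒰 EZ EY 𝒵 𝒳 𝒴 : Type}
    (muU : PMF 𝒰) (muEZ : PMF EZ) (muEY : PMF EY)
    (gZ : 𝒰 × EZ → 𝒵) (gY : 𝒳 × 𝒵 × 𝒰 × EY → 𝒴) (x : 𝒳) : PMF 𝒴 := do
  let u ← muU
  let ez ← muEZ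
  let ey ← muEY
  pure (gY (x, gZ (u, ez), u, ey))

namespace PMF

variable {α β γ δ : Type*}

theorem map_apply_eq_toOuterMeasure (p : PMF α) (f : α → β) (b : β) :
    p.map f b = p.toOuterMeasure (f ⁻¹' {b}) := by
  rw [← toOuterMeasure_apply_singleton, toOuterMeasure_map_apply]

theorem toOuterMeasure_bind_map_of_mem_iff (p : PMF α) (q : PMF β) (F : α → β → γ)
    {S : Set γ} {s : Set α} {t : Set β} (hF : ∀ a b, F a b ∈ S ↔ a ∈ s ∧ b ∈ t) :
    (p.bind fun a => q.map (F a)).toOuterMeasure S = p.toOuterMeasure s * q.toOuterMeasure t := by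
  have hfiber (a : α) :
      p a * q.toOuterMeasure (F a ⁻¹' S) = s.indicator p a * q.toOuterMeasure t := by
    by_cases ha : a ∈ s <;> simp [Set.preimage, hF, ha]
  rw [toOuterMeasure_bind_apply]
  simp only [toOuterMeasure_map_apply, hfiber]
  rw [ENNReal.tsum_mul_right, ← toOuterMeasure_apply]

theorem sum_apply_prodMk_eq_map_snd [Fintype γ] (r : PMF (γ × δ)) (d : δ) :
    ∑ c, r (c, d) = r.map Prod.snd d := by
  rw [map_apply, ENNReal.tsum_prod', tsum_fintype]
  refine Finset.sum_congr rfl fun c _ => ?_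
  rw [tsum_eq_single d fun d' hd' => if_neg (Ne.symm hd'), if_pos rfl]

end PMF

section Backdoor

variable {α β 𝒵 𝒳 𝒴 : Type*} (p : PMF α) (q : PMF β)
  (f : α → 𝒵) (g : 𝒵 → β → 𝒳) (h : 𝒳 → α → 𝒴)

/-- `a` carries every noise except that of `X`, which is `b`; `Y` sees `Z` only through `a`. -/
noncomputable def backdoorObs : PMF (𝒵 × 𝒳 × 𝒴) :=
  p.bind fun a => q.map fun b => (f a, g (f a) b, h (g (f a) b) a)

theorem backdoorObs_map_fst_apply (z : 𝒵) :
    (backdoorObs p q f g h).map Prod.fst z = p.map f z := by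
  rw [PMF.map_apply_eq_toOuterMeasure, PMF.map_apply_eq_toOuterMeasure, backdoorObs,
    PMF.toOuterMeasure_bind_map_of_mem_iff (s := f ⁻¹' {z}) (t := Set.univ) _ _ _ (by simp),
    PMF.toOuterMeasure_apply_eq_one_iff _ _ |>.2 (Set.subset_univ _), mul_one]

theorem backdoorObs_map_fst_snd_fst_apply (z : 𝒵) (x : 𝒳) :
    (backdoorObs p q f g h).map (fun v => (v.1, v.2.1)) (z, x) = p.map f z * q.map (g z) x := by
  rw [PMF.map_apply_eq_toOuterMeasure, PMF.map_apply_eq_toOuterMeasure,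
    PMF.map_apply_eq_toOuterMeasure, backdoorObs,
    PMF.toOuterMeasure_bind_map_of_mem_iff (s := f ⁻¹' {z}) (t := g z ⁻¹' {x})]
  intro a b
  simp only [Set.mem_preimage, Set.mem_singleton_iff, Prod.mk.injEq]
  aesop

theorem backdoorObs_apply (z : 𝒵) (x : 𝒳) (y : 𝒴) :
    backdoorObs p q f g h (z, x, y) = p.map (fun a => (f a, h x a)) (z, y) * q.map (g z) x := by
  rw [← PMF.toOuterMeasure_apply_singleton, PMF.map_apply_eq_toOuterMeasure,
    PMF.map_apply_eq_toOuterMeasure, backdoorObs,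
    PMF.toOuterMeasure_bind_map_of_mem_iff (s := (fun a => (f a, h x a)) ⁻¹' {(z, y)})
      (t := g z ⁻¹' {x})]
  intro a b
  simp only [Set.mem_preimage, Set.mem_singleton_iff, Prod.mk.injEq]
  aesop

theorem backdoor_adjustment [Fintype 𝒵] (x : 𝒳) (y : 𝒴)
    (hpos : ∀ z, (backdoorObs p q f g h).map (fun v => (v.1, v.2.1)) (z, x) ≠ 0) :
    p.map (h x) y = ∑ z, (backdoorObs p q f g h).map Prod.fst z *
      (backdoorObs p q f g h (z, x, y) /
        (backdoorObs p q f g h).map (fun v => (v.1, v.2.1)) (z, x)) := by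
  have hY : p.map (h x) = (p.map fun a => (f a, h x a)).map Prod.snd := by
    rw [PMF.map_comp]; rfl
  rw [hY, ← PMF.sum_apply_prodMk_eq_map_snd]
  refine Finset.sum_congr rfl fun z _ => ?_
  have hz := hpos z
  rw [backdoorObs_map_fst_snd_fst_apply] at hz ⊢
  rw [backdoorObs_map_fst_apply, backdoorObs_apply]
  obtain ⟨hZ, hX⟩ := mul_ne_zero_iff.1 hz
  rw [ENNReal.mul_div_mul_right _ _ hX (PMF.apply_ne_top _ _),
    ENNReal.mul_div_cancel hZ (PMF.apply_ne_top _ _)]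

end Backdoor

section FunctionalModel

variable {𝒰 EZ EX EY 𝒵 𝒳 𝒴 : Type}
  (muU : PMF 𝒰) (muEZ : PMF EZ) (muEX : PMF EX) (muEY : PMF EY)
  (gZ : 𝒰 × EZ → 𝒵) (gX : 𝒵 × EX → 𝒳) (gY : 𝒳 × 𝒵 × 𝒰 × EY → 𝒴)

noncomputable def bdNoise : PMF (𝒰 × EZ × EY) :=
  muU.bind fun u => muEZ.bind fun ez => muEY.map fun ey => (u, ez, ey)

theorem bdObs_eq_backdoorObs :
    bdObs muU muEZ muEX muEY gZ gX gY =
      backdoorObs (bdNoise muU muEZ muEY) muEX (fun a => gZ (a.1, a.2.1)) (fun z ex => gX (z, ex))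
        (fun x a => gY (x, gZ (a.1, a.2.1), a.1, a.2.2)) := by
  simp only [backdoorObs, bdNoise, PMF.bind_bind, PMF.bind_map]
  refine congrArg muU.bind (funext fun u => congrArg muEZ.bind (funext fun ez => ?_))
  exact PMF.bind_comm muEX muEY _

theorem bdDo_eq_map (x : 𝒳) :
    bdDo muU muEZ muEY gZ gY x =
      (bdNoise muU muEZ muEY).map fun a => gY (x, gZ (a.1, a.2.1), a.1, a.2.2) := by
  simp only [bdNoise, PMF.map_bind, PMF.map_comp]
  rfl

end FunctionalModel

theorem backdoor_adjustment_functional_general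
    {𝒰 EZ EX EY 𝒵 𝒳 𝒴 : Type}
    [Fintype 𝒵]
    (muU : PMF 𝒰) (muEZ : PMF EZ) (muEX : PMF EX) (muEY : PMF EY)
    (gZ : 𝒰 × EZ → 𝒵) (gX : 𝒵 × EX → 𝒳) (gY : 𝒳 × 𝒵 × 𝒰 × EY → 𝒴)
    (hpos : ∀ (x : 𝒳) (z : 𝒵),
      0 < (bdObs muU muEZ muEX muEY gZ gX gY).map (fun v => (v.1, v.2.1)) (z, x)) :
    ∀ (x : 𝒳) (y : 𝒴),
      bdDo muU muEZ muEY gZ gY x y =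
        ∑ z : 𝒵,
          ((bdObs muU muEZ muEX muEY gZ gX gY).map (fun v => v.1) z) *
          ((bdObs muU muEZ muEX muEY gZ gX gY) (z, x, y)
            / (bdObs muU muEZ muEX muEY gZ gX gY).map (fun v => (v.1, v.2.1)) (z, x)) := by
  intro x y
  rw [bdObs_eq_backdoorObs] at hpos ⊢
  rw [bdDo_eq_map]
  exact backdoor_adjustment _ _ _ _ _ x y fun z => (hpos x z).ne'

theorem backdoor_adjustment_functional
    {𝒰 EZ EX EY 𝒵 𝒳 𝒴 : Type}
    [Fintype 𝒰] [Nonempty 𝒰] [Fintype EZ] [Nonempty EZ] [Fintype EX] [Nonempty EX]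
    [Fintype EY] [Nonempty EY] [Fintype 𝒵] [Nonempty 𝒵] [Fintype 𝒳] [Nonempty 𝒳]
    [Fintype 𝒴] [Nonempty 𝒴]
    (muU : PMF 𝒰) (muEZ : PMF EZ) (muEX : PMF EX) (muEY : PMF EY)
    (gZ : 𝒰 × EZ → 𝒵) (gX : 𝒵 × EX → 𝒳) (gY : 𝒳 × 𝒵 × 𝒰 × EY → 𝒴)
    (hpos : ∀ (x : 𝒳) (z : 𝒵),
      0 < (bdObs muU muEZ muEX muEY gZ gX gY).map (fun v => (v.1, v.2.1)) (z, x)) :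
    ∀ (x : 𝒳) (y : 𝒴),
      bdDo muU muEZ muEY gZ gY x y =
        ∑ z : 𝒵,
          ((bdObs muU muEZ muEX muEY gZ gX gY).map (fun v => v.1) z) *
          ((bdObs muU muEZ muEX muEY gZ gX gY) (z, x, y)
            / (bdObs muU muEZ muEX muEY gZ gX gY).map (fun v => (v.1, v.2.1)) (z, x)) :=
  backdoor_adjustment_functional_general muU muEZ muEX muEY gZ gX gY hpos
end

section
/- Imitation by pi-backdoor (sufficiency instance for the graph of Fig. 1b): in the pi-backdoor functional model, drawing X' from pi(Z) conditionally independently of (u, e_L, e_X, e_Y) given Z and setting Y' := gY(X', Z, u, e_Y) yields a joint law of (Z, X', Y') equal to the joint law of (Z, X, Y); in particular, the law of Y' equals the law of Y, so the policy pi exactly imitates the expert's reward distribution even though X additionally depends on the latent variable L. -/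
/-!
Pi-backdoor functional model (Fig. 1b instance): independent noises `u, e_Z, e_L, e_X, e_Y`;
`Z := gZ (u, e_Z)`, `L := gL (Z, e_L)`, `X := gX (Z, L, e_X)`, `Y := gY (X, Z, u, e_Y)`.
The policy `π(z)` is the pushforward of the laws of `(e_L, e_X)` under
`(l, e) ↦ gX (z, gL (z, l), e)`, i.e. `π(x | z) = P(X = x | Z = z)`.
STATEMENT 8: drawing `X' ~ π(Z)` conditionally independently of `(u, e_L, e_X, e_Y)` given `Z`
and setting `Y' := gY (X', Z, u, e_Y)` yields a joint law of `(Z, X', Y')` equal to the joint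
law of `(Z, X, Y)`; in particular the law of `Y'` equals the law of `Y`.
-/

open scoped ENNReal

/-- Observational joint law of `(Z, X, Y)`. -/
noncomputable def pbObs {𝒰 EZ EL EX EY 𝒵 ℒ 𝒳 𝒴 : Type}
    (muU : PMF 𝒰) (muEZ : PMF EZ) (muEL : PMF EL) (muEX : PMF EX) (muEY : PMF EY)
    (gZ : 𝒰 × EZ → 𝒵) (gL : 𝒵 × EL → ℒ) (gX : 𝒵 × ℒ × EX → 𝒳)
    (gY : 𝒳 × 𝒵 × 𝒰 × EY → 𝒴) : PMF (𝒵 × 𝒳 × 𝒴) := do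
  let u ← muU
  let ez ← muEZ
  let el ← muEL
  let ex ← muEX
  let ey ← muEY
  let z := gZ (u, ez)
  let x := gX (z, gL (z, el), ex)
  pure (z, x, gY (x, z, u, ey))

/-- The behavior-cloning policy `π(z)`: pushforward of the laws of `(e_L, e_X)` under
`(l, e) ↦ gX (z, gL (z, l), e)`. -/
noncomputable def pbPolicy {EL EX 𝒵 ℒ 𝒳 : Type}
    (muEL : PMF EL) (muEX : PMF EX)
    (gL : 𝒵 × EL → ℒ) (gX : 𝒵 × ℒ × EX → 𝒳) (z : 𝒵) : PMF 𝒳 := do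
  let el ← muEL
  let ex ← muEX
  pure (gX (z, gL (z, el), ex))

/-- Intervened joint law of `(Z, X', Y')` under `do(π)`: `X' ~ π(Z)` drawn conditionally
independently of `(u, e_L, e_X, e_Y)` given `Z`, and `Y' := gY (X', Z, u, e_Y)`. -/
noncomputable def pbInterv {𝒰 EZ EL EX EY 𝒵 ℒ 𝒳 𝒴 : Type}
    (muU : PMF 𝒰) (muEZ : PMF EZ) (muEL : PMF EL) (muEX : PMF EX) (muEY : PMF EY)
    (gZ : 𝒰 × EZ → 𝒵) (gL : 𝒵 × EL → ℒ) (gX : 𝒵 × ℒ × EX → 𝒳)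
    (gY : 𝒳 × 𝒵 × 𝒰 × EY → 𝒴) : PMF (𝒵 × 𝒳 × 𝒴) := do
  let u ← muU
  let ez ← muEZ
  let z := gZ (u, ez)
  let x' ← pbPolicy muEL muEX gL gX z
  let ey ← muEY
  pure (z, x', gY (x', z, u, ey))

theorem pi_backdoor_imitation
    {𝒰 EZ EL EX EY 𝒵 ℒ 𝒳 𝒴 : Type}
    [Fintype 𝒰] [Nonempty 𝒰] [Fintype EZ] [Nonempty EZ] [Fintype EL] [Nonempty EL]
    [Fintype EX] [Nonempty EX] [Fintype EY] [Nonempty EY] [Fintype 𝒵] [Nonempty 𝒵]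
    [Fintype ℒ] [Nonempty ℒ] [Fintype 𝒳] [Nonempty 𝒳] [Fintype 𝒴] [Nonempty 𝒴]
    (muU : PMF 𝒰) (muEZ : PMF EZ) (muEL : PMF EL) (muEX : PMF EX) (muEY : PMF EY)
    (gZ : 𝒰 × EZ → 𝒵) (gL : 𝒵 × EL → ℒ) (gX : 𝒵 × ℒ × EX → 𝒳)
    (gY : 𝒳 × 𝒵 × 𝒰 × EY → 𝒴) :
    pbInterv muU muEZ muEL muEX muEY gZ gL gX gY
      = pbObs muU muEZ muEL muEX muEY gZ gL gX gY ∧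
    (pbInterv muU muEZ muEL muEX muEY gZ gL gX gY).map (fun v => v.2.2)
      = (pbObs muU muEZ muEL muEX muEY gZ gL gX gY).map (fun v => v.2.2) := by
  have h : pbInterv muU muEZ muEL muEX muEY gZ gL gX gY
      = pbObs muU muEZ muEL muEX muEY gZ gL gX gY := by
    simp only [pbInterv, pbObs, pbPolicy, Bind.bind, Pure.pure, PMF.bind_bind, PMF.pure_bind]
  exact ⟨h, by rw [h]⟩
end

section
/- Imitation by direct parents (instance of Theorem 1): in the direct-parents functional model, drawing X' from pi(Pa) conditionally independently of (u, e_P, e_Y) given Pa and setting Y' := gY(X', Pa, u, e_Y) yields a joint law of (Pa, X', Y') equal to the joint law of (Pa, X, Y); in particular, the law of Y' equals the law of Y, so the behavior-cloning policy pi(x | pa) = P(x | pa) exactly imitates the expert's reward distribution. -/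
/-!
Direct-parents functional model (instance of Theorem 1): independent noises `u, e_P, e_X, e_Y`;
`Pa := gP (u, e_P)`, `X := gX (Pa, e_X)`, `Y := gY (X, Pa, u, e_Y)`; the action noise `e_X` is
independent of all other noises (no unobserved confounder into `X`). The behavior-cloning
policy `π(pa)` is the pushforward of the law of `e_X` under `e ↦ gX (pa, e)`, i.e.
`π(x | pa) = P(X = x | Pa = pa)`.
STATEMENT 9: drawing `X' ~ π(Pa)` conditionally independently of `(u, e_P, e_Y)` given `Pa`
and setting `Y' := gY (X', Pa, u, e_Y)` yields a joint law of `(Pa, X', Y')` equal to the joint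
law of `(Pa, X, Y)`; in particular the law of `Y'` equals the law of `Y`.
-/

open scoped ENNReal

/-- Observational joint law of `(Pa, X, Y)`. -/
noncomputable def dpObs {𝒰 EP EX EY PaT 𝒳 𝒴 : Type}
    (muU : PMF 𝒰) (muEP : PMF EP) (muEX : PMF EX) (muEY : PMF EY)
    (gP : 𝒰 × EP → PaT) (gX : PaT × EX → 𝒳) (gY : 𝒳 × PaT × 𝒰 × EY → 𝒴) :
    PMF (PaT × 𝒳 × 𝒴) := do
  let u ← muU
  let ep ← muEP
  let ex ← muEX
  let ey ← muEY
  let pa := gP (u, ep)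
  let x := gX (pa, ex)
  pure (pa, x, gY (x, pa, u, ey))

/-- The behavior-cloning policy `π(pa)`: pushforward of the law of `e_X` under
`e ↦ gX (pa, e)`. -/
noncomputable def dpPolicy {EX PaT 𝒳 : Type}
    (muEX : PMF EX) (gX : PaT × EX → 𝒳) (pa : PaT) : PMF 𝒳 :=
  muEX.map fun e => gX (pa, e)

/-- Intervened joint law of `(Pa, X', Y')` under `do(π)`: `X' ~ π(Pa)` drawn conditionally
independently of `(u, e_P, e_Y)` given `Pa`, and `Y' := gY (X', Pa, u, e_Y)`. -/
noncomputable def dpInterv {𝒰 EP EX EY PaT 𝒳 𝒴 : Type}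
    (muU : PMF 𝒰) (muEP : PMF EP) (muEX : PMF EX) (muEY : PMF EY)
    (gP : 𝒰 × EP → PaT) (gX : PaT × EX → 𝒳) (gY : 𝒳 × PaT × 𝒰 × EY → 𝒴) :
    PMF (PaT × 𝒳 × 𝒴) := do
  let u ← muU
  let ep ← muEP
  let pa := gP (u, ep)
  let x' ← dpPolicy muEX gX pa
  let ey ← muEY
  pure (pa, x', gY (x', pa, u, ey))

theorem direct_parents_imitation
    {𝒰 EP EX EY PaT 𝒳 𝒴 : Type}
    [Fintype 𝒰] [Nonempty 𝒰] [Fintype EP] [Nonempty EP] [Fintype EX] [Nonempty EX]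
    [Fintype EY] [Nonempty EY] [Fintype PaT] [Nonempty PaT] [Fintype 𝒳] [Nonempty 𝒳]
    [Fintype 𝒴] [Nonempty 𝒴]
    (muU : PMF 𝒰) (muEP : PMF EP) (muEX : PMF EX) (muEY : PMF EY)
    (gP : 𝒰 × EP → PaT) (gX : PaT × EX → 𝒳) (gY : 𝒳 × PaT × 𝒰 × EY → 𝒴) :
    dpInterv muU muEP muEX muEY gP gX gY = dpObs muU muEP muEX muEY gP gX gY ∧
    (dpInterv muU muEP muEX muEY gP gX gY).map (fun v => v.2.2)
      = (dpObs muU muEP muEX muEY gP gX gY).map (fun v => v.2.2) := by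
  have h : dpInterv muU muEP muEX muEY gP gX gY = dpObs muU muEP muEX muEY gP gX gY := by
    simp only [dpInterv, dpObs, dpPolicy, PMF.map]
    refine congrArg _ (funext fun u => congrArg _ (funext fun ep => ?_))
    show ((muEX.bind _).bind _) = (muEX.bind _)
    rw [PMF.bind_bind]
    simp [PMF.pure_bind, Function.comp]
  exact ⟨h, by rw [h]⟩
end

section
/- Imitation via a surrogate (instance of Lemma 2 for the graph of Fig. 1c): in the surrogate functional model, for any PMF pi on 𝒳, if the law of S' equals the law of S, then the law of Y' equals the law of Y; i.e., any policy that imitates the observational distribution of the surrogate S also imitates the observational distribution of the latent reward Y. -/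
/-!
Surrogate functional model (Fig. 1c instance): independent noises `u, e_X, e_W, e_S, e_Y`;
`X := gX (u, e_X)`, `W := gW (X, e_W)`, `S := gS (W, u, e_S)`, `Y := gY (S, e_Y)`.
For a PMF `π` on `𝒳`, `do(π)` draws `X' ~ π` independently of `(u, e_W, e_S, e_Y)` and sets
`W' := gW (X', e_W)`, `S' := gS (W', u, e_S)`, `Y' := gY (S', e_Y)`.
STATEMENT 10: for any `π`, if the law of `S'` equals the law of `S`, then the law of `Y'`
equals the law of `Y`.
-/

open scoped ENNReal

private lemma pmf_bind_eq {α β : Type} (p : PMF α) (f : α → PMF β) :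
    p >>= f = p.bind f := rfl

private lemma pmf_pure_eq {α : Type} (a : α) : (pure a : PMF α) = PMF.pure a := rfl

/-- Observational joint law of `(X, W, S, Y)` in the surrogate functional model. -/
noncomputable def srgObs {𝒰 EX EW ES EY 𝒳 𝒲 𝒮 𝒴 : Type}
    (muU : PMF 𝒰) (muEX : PMF EX) (muEW : PMF EW) (muES : PMF ES) (muEY : PMF EY)
    (gX : 𝒰 × EX → 𝒳) (gW : 𝒳 × EW → 𝒲) (gS : 𝒲 × 𝒰 × ES → 𝒮) (gY : 𝒮 × EY → 𝒴) :
    PMF (𝒳 × 𝒲 × 𝒮 × 𝒴) := do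
  let u ← muU
  let ex ← muEX
  let ew ← muEW
  let es ← muES
  let ey ← muEY
  let x := gX (u, ex)
  let w := gW (x, ew)
  let s := gS (w, u, es)
  pure (x, w, s, gY (s, ey))

/-- Intervened joint law of `(X', W', S', Y')` under `do(π)` in the surrogate model. -/
noncomputable def srgInterv {𝒰 EW ES EY 𝒳 𝒲 𝒮 𝒴 : Type}
    (muU : PMF 𝒰) (muEW : PMF EW) (muES : PMF ES) (muEY : PMF EY)
    (gW : 𝒳 × EW → 𝒲) (gS : 𝒲 × 𝒰 × ES → 𝒮) (gY : 𝒮 × EY → 𝒴) (π : PMF 𝒳) :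
    PMF (𝒳 × 𝒲 × 𝒮 × 𝒴) := do
  let x' ← π
  let u ← muU
  let ew ← muEW
  let es ← muES
  let ey ← muEY
  let w' := gW (x', ew)
  let s' := gS (w', u, es)
  pure (x', w', s', gY (s', ey))

theorem surrogate_imitation
    {𝒰 EX EW ES EY 𝒳 𝒲 𝒮 𝒴 : Type}
    [Fintype 𝒰] [Nonempty 𝒰] [Fintype EX] [Nonempty EX] [Fintype EW] [Nonempty EW]
    [Fintype ES] [Nonempty ES] [Fintype EY] [Nonempty EY] [Fintype 𝒳] [Nonempty 𝒳]
    [Fintype 𝒲] [Nonempty 𝒲] [Fintype 𝒮] [Nonempty 𝒮] [Fintype 𝒴] [Nonempty 𝒴]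
    (muU : PMF 𝒰) (muEX : PMF EX) (muEW : PMF EW) (muES : PMF ES) (muEY : PMF EY)
    (gX : 𝒰 × EX → 𝒳) (gW : 𝒳 × EW → 𝒲) (gS : 𝒲 × 𝒰 × ES → 𝒮) (gY : 𝒮 × EY → 𝒴) :
    ∀ π : PMF 𝒳,
      (srgInterv muU muEW muES muEY gW gS gY π).map (fun v => v.2.2.1)
        = (srgObs muU muEX muEW muES muEY gX gW gS gY).map (fun v => v.2.2.1) →
      (srgInterv muU muEW muES muEY gW gS gY π).map (fun v => v.2.2.2)
        = (srgObs muU muEX muEW muES muEY gX gW gS gY).map (fun v => v.2.2.2) := by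
  intro π hS
  have hI : (srgInterv muU muEW muES muEY gW gS gY π).map (fun v => v.2.2.2)
      = ((srgInterv muU muEW muES muEY gW gS gY π).map (fun v => v.2.2.1)).bind
          (fun s => muEY.map (fun ey => gY (s, ey))) := by
    simp only [srgInterv, PMF.map, pmf_bind_eq, pmf_pure_eq, PMF.bind_bind, PMF.pure_bind, PMF.bind_const, Function.comp_def]
  have hO : (srgObs muU muEX muEW muES muEY gX gW gS gY).map (fun v => v.2.2.2)
      = ((srgObs muU muEX muEW muES muEY gX gW gS gY).map (fun v => v.2.2.1)).bind
          (fun s => muEY.map (fun ey => gY (s, ey))) := by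
    simp only [srgObs, PMF.map, pmf_bind_eq, pmf_pure_eq, PMF.bind_bind, PMF.pure_bind, PMF.bind_const, Function.comp_def]
  rw [hI, hO, hS]
end

section
/- Imitation in an unconfounded chain (Fig. 2a instance): in the chain functional model, drawing X' from the marginal law of X independently of (e_W, e_Y) and setting W' := gW(X', e_W), Y' := gY(W', e_Y) yields a joint law of (X', W', Y') equal to the joint law of (X, W, Y); in particular, the policy pi(x) = P(x) exactly imitates the expert's reward distribution: the law of Y' equals the law of Y. -/
/-!
Chain functional model (Fig. 2a instance): independent noises `e_X, e_W, e_Y`;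
`X := gX e_X`, `W := gW (X, e_W)`, `Y := gY (W, e_Y)`.
STATEMENT 16: drawing `X'` from the marginal law of `X` independently of `(e_W, e_Y)` and
setting `W' := gW (X', e_W)`, `Y' := gY (W', e_Y)` yields a joint law of `(X', W', Y')` equal
to the joint law of `(X, W, Y)`; in particular the policy `π(x) = P(x)` exactly imitates the
expert's reward distribution: the law of `Y'` equals the law of `Y`.
-/

open scoped ENNReal

/-- Observational joint law of `(X, W, Y)` in the chain functional model. -/
noncomputable def chainObs {EX EW EY 𝒳 𝒲 𝒴 : Type}
    (muEX : PMF EX) (muEW : PMF EW) (muEY : PMF EY)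
    (gX : EX → 𝒳) (gW : 𝒳 × EW → 𝒲) (gY : 𝒲 × EY → 𝒴) : PMF (𝒳 × 𝒲 × 𝒴) := do
  let ex ← muEX
  let ew ← muEW
  let ey ← muEY
  let x := gX ex
  let w := gW (x, ew)
  pure (x, w, gY (w, ey))

/-- Intervened joint law of `(X', W', Y')`: `X'` is drawn from the marginal law of `X`
independently of `(e_W, e_Y)`, then `W' := gW (X', e_W)`, `Y' := gY (W', e_Y)`. -/
noncomputable def chainInterv {EX EW EY 𝒳 𝒲 𝒴 : Type}
    (muEX : PMF EX) (muEW : PMF EW) (muEY : PMF EY)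
    (gX : EX → 𝒳) (gW : 𝒳 × EW → 𝒲) (gY : 𝒲 × EY → 𝒴) : PMF (𝒳 × 𝒲 × 𝒴) := do
  let x' ← muEX.map gX
  let ew ← muEW
  let ey ← muEY
  let w' := gW (x', ew)
  pure (x', w', gY (w', ey))

theorem chain_marginal_cloning_imitates
    {EX EW EY 𝒳 𝒲 𝒴 : Type}
    [Fintype EX] [Nonempty EX] [Fintype EW] [Nonempty EW] [Fintype EY] [Nonempty EY]
    [Fintype 𝒳] [Nonempty 𝒳] [Fintype 𝒲] [Nonempty 𝒲] [Fintype 𝒴] [Nonempty 𝒴]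
    (muEX : PMF EX) (muEW : PMF EW) (muEY : PMF EY)
    (gX : EX → 𝒳) (gW : 𝒳 × EW → 𝒲) (gY : 𝒲 × EY → 𝒴) :
    chainInterv muEX muEW muEY gX gW gY = chainObs muEX muEW muEY gX gW gY ∧
    (chainInterv muEX muEW muEY gX gW gY).map (fun v => v.2.2)
      = (chainObs muEX muEW muEY gX gW gY).map (fun v => v.2.2) := by
  have h : chainInterv muEX muEW muEY gX gW gY = chainObs muEX muEW muEY gX gW gY := by
    simp only [chainInterv, chainObs, PMF.map, Bind.bind, Pure.pure, PMF.bind_bind,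
      Function.comp, PMF.pure_bind]
  exact ⟨h, by rw [h]⟩
end
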